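/- arXiv:q-alg/9607024 — 4 statements merged into one kernel-verified Lean document; each statement's English description precedes it below -/
import Mathlib

section
/- (Garsia–Tesler identity) In the field ℚ(t)(x_1,…,x_N) of rational functions, for every 0 ≤ k ≤ N one has Σ_I (∏_{i∈I, j∉I} (x_i − t x_j)/(x_i − x_j)) · ∏_{i∈I} x_i = e_k(x_1,…,x_N), where the sum runs over all k-element subsets I of {1,…,N}; in particular the left-hand side is independent of t. -/
open Finset

noncomputable section

/-- The field `ℚ(t)(x_1,…,x_N)` of rational functions in the indeterminates
`t, x_1, …, x_N`. -/
abbrev GTField (N : ℕ) := FractionRing (MvPolynomial (Option (Fin N)) ℚ)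

/-- The indeterminate `t`. -/
def tGT (N : ℕ) : GTField N :=
  algebraMap (MvPolynomial (Option (Fin N)) ℚ) _ (MvPolynomial.X none)

/-- The indeterminate `x_i`. -/
def xGT {N : ℕ} (i : Fin N) : GTField N :=
  algebraMap (MvPolynomial (Option (Fin N)) ℚ) _ (MvPolynomial.X (some i))

open Polynomial

variable {F : Type*} [Field F] {σ : Type*} [DecidableEq σ]


private lemma sum_shift_to_erase {M : Type*} [AddCommMonoid M] {σ : Type*} [DecidableEq σ]
    (g : Finset σ → M) {s : Finset σ} {l : σ} (hl : l ∈ s) (k : ℕ)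
    (hv : ∀ I ∈ s.powersetCard (k + 1), l ∉ I → g I = 0) :
    ∑ I ∈ s.powersetCard (k + 1), g I
      = ∑ J ∈ (s.erase l).powersetCard k, g (insert l J) := by
  have hinj : ∀ a ∈ (s.erase l).powersetCard k, ∀ b ∈ (s.erase l).powersetCard k,
      insert l a = insert l b → a = b := by
    intro a ha b hb hab
    have ha' : l ∉ a := fun h => (Finset.notMem_erase l s) ((Finset.mem_powersetCard.mp ha).1 h)
    have hb' : l ∉ b := fun h => (Finset.notMem_erase l s) ((Finset.mem_powersetCard.mp hb).1 h)
    rw [← Finset.erase_insert ha', ← Finset.erase_insert hb', hab]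
  rw [← Finset.sum_image hinj]
  refine (Finset.sum_subset ?_ ?_).symm
  · intro I hI
    obtain ⟨J, hJ, rfl⟩ := Finset.mem_image.mp hI
    obtain ⟨hJe, hJc⟩ := Finset.mem_powersetCard.mp hJ
    refine Finset.mem_powersetCard.mpr
      ⟨Finset.insert_subset hl (hJe.trans (Finset.erase_subset _ _)), ?_⟩
    rw [Finset.card_insert_of_notMem fun h => Finset.notMem_erase l s (hJe h), hJc]
  · intro I hI hnI
    refine hv I hI fun hlI => hnI ?_
    refine Finset.mem_image.mpr ⟨I.erase l, ?_, Finset.insert_erase hlI⟩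
    obtain ⟨hIs, hIc⟩ := Finset.mem_powersetCard.mp hI
    refine Finset.mem_powersetCard.mpr ⟨Finset.erase_subset_erase l hIs, ?_⟩
    rw [Finset.card_erase_of_mem hlI, hIc]
    omega

private lemma sum_restrict_to_erase {M : Type*} [AddCommMonoid M] {σ : Type*} [DecidableEq σ]
    (g : Finset σ → M) {s : Finset σ} {l : σ} (k : ℕ)
    (hv : ∀ J ∈ s.powersetCard k, l ∈ J → g J = 0) :
    ∑ J ∈ s.powersetCard k, g J = ∑ J ∈ (s.erase l).powersetCard k, g J := by
  refine (Finset.sum_subset (Finset.powersetCard_mono (Finset.erase_subset _ _)) ?_).symm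
  intro J hJ hnJ
  refine hv J hJ ?_
  obtain ⟨hJs, hJc⟩ := Finset.mem_powersetCard.mp hJ
  by_contra hlJ
  exact hnJ (Finset.mem_powersetCard.mpr ⟨Finset.subset_erase.mpr ⟨hJs, hlJ⟩, hJc⟩)

private lemma gt_key (t : F) (x : σ → F) :
    ∀ s : Finset σ, (∀ i ∈ s, x i ≠ 0) → Set.InjOn x s → ∀ k : ℕ,
    ∑ I ∈ s.powersetCard k,
        (∏ i ∈ I, ∏ j ∈ s \ I, (x i - t * x j) / (x i - x j)) * ∏ i ∈ I, x i
      = ∑ I ∈ s.powersetCard k, ∏ i ∈ I, x i := by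
  intro s
  induction s using Finset.cons_induction with
  | empty =>
    intro _ _ k
    refine Finset.sum_congr rfl fun I hI => ?_
    rw [Finset.empty_sdiff]
    simp
  | cons c s hc IH =>
    intro h0 hinj k
    classical
    simp only [Finset.cons_eq_insert] at *
    have h0' : ∀ i ∈ s, x i ≠ 0 := fun i hi => h0 i (mem_insert_of_mem hi)
    have hinj' : Set.InjOn x s := hinj.mono (by intro a ha; simp [Finset.mem_coe.mp ha])
    have hxu : ∀ j ∈ s, x j ≠ x c := by
      intro j hj h
      exact hc (by rwa [hinj (by simp [hj]) (by simp) h] at hj)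
    obtain _ | k' := k
    · simp
    · set u := x c with hu
      set m := s.card with hm
      set w : Finset σ → F := fun I => ∏ i ∈ I, ∏ j ∈ s \ I, (x i - t * x j) / (x i - x j)
        with hw
      set R0 : F := ∑ I ∈ s.powersetCard (k' + 1), ∏ i ∈ I, x i with hR0
      set R1 : F := ∑ I ∈ s.powersetCard k', ∏ i ∈ I, x i with hR1
      set P : F[X] := ∏ j ∈ s, (X - C (x j)) with hP
      set G : F[X] :=
        (∑ I ∈ s.powersetCard (k' + 1), C (w I * ∏ i ∈ I, x i) *
            ((∏ i ∈ I, (C t * X - C (x i))) * ∏ j ∈ s \ I, (X - C (x j))))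
        + (∑ J ∈ s.powersetCard k', C (w J * ∏ i ∈ J, x i) *
            (X * ((∏ j ∈ s \ J, (X - C (t * x j))) * ∏ j ∈ J, (X - C (x j)))))
        - (C R0 + C R1 * X) * P with hG
      have hIH1 : ∑ I ∈ s.powersetCard (k' + 1), w I * ∏ i ∈ I, x i = R0 :=
        IH h0' hinj' (k' + 1)
      have hIH0 : ∑ J ∈ s.powersetCard k', w J * ∏ i ∈ J, x i = R1 := IH h0' hinj' k'
      have hPm : P.Monic := monic_prod_of_monic _ _ fun j _ => monic_X_sub_C _
      have hPdeg : P.natDegree = m := by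
        rw [hP, natDegree_prod_of_monic _ _ fun j _ => monic_X_sub_C _]
        simp [natDegree_X_sub_C, hm]
      have hterm1deg : ∀ I ∈ s.powersetCard (k' + 1),
          (C (w I * ∏ i ∈ I, x i) *
            ((∏ i ∈ I, (C t * X - C (x i))) * ∏ j ∈ s \ I, (X - C (x j)))).natDegree ≤ m := by
        intro I hI
        obtain ⟨hIs, hIcard⟩ := Finset.mem_powersetCard.mp hI
        have hIm : I.card ≤ m := hm ▸ Finset.card_le_card hIs
        refine (natDegree_C_mul_le _ _).trans (natDegree_mul_le.trans ?_)
        have h1 : (∏ i ∈ I, (C t * X - C (x i))).natDegree ≤ I.card := by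
          refine (natDegree_prod_le _ _).trans ?_
          refine (Finset.sum_le_card_nsmul I _ 1 fun i _ => ?_).trans (by simp)
          refine (natDegree_sub_le _ _).trans (max_le ?_ ?_)
          · exact (natDegree_C_mul_le _ _).trans_eq natDegree_X
          · simp
        have h2 : (∏ j ∈ s \ I, (X - C (x j))).natDegree = m - I.card := by
          rw [natDegree_prod_of_monic _ _ fun j _ => monic_X_sub_C _]
          simp only [natDegree_X_sub_C, Finset.sum_const, smul_eq_mul, mul_one]
          rw [Finset.card_sdiff_of_subset hIs]
        omega
      have hQmonic : ∀ J : Finset σ, (X * ((∏ j ∈ s \ J, (X - C (t * x j))) *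
          ∏ j ∈ J, (X - C (x j)))).Monic := fun J =>
        monic_X.mul ((monic_prod_of_monic _ _ fun j _ => monic_X_sub_C _).mul
          (monic_prod_of_monic _ _ fun j _ => monic_X_sub_C _))
      have hQdeg : ∀ J ∈ s.powersetCard k', (X * ((∏ j ∈ s \ J, (X - C (t * x j))) *
          ∏ j ∈ J, (X - C (x j)))).natDegree = m + 1 := by
        intro J hJ
        obtain ⟨hJs, hJcard⟩ := Finset.mem_powersetCard.mp hJ
        have hJm : J.card ≤ m := hm ▸ Finset.card_le_card hJs
        rw [monic_X.natDegree_mul ((monic_prod_of_monic _ _ fun j _ => monic_X_sub_C _).mul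
          (monic_prod_of_monic _ _ fun j _ => monic_X_sub_C _)),
          (monic_prod_of_monic _ _ fun j _ => monic_X_sub_C _).natDegree_mul
            (monic_prod_of_monic _ _ fun j _ => monic_X_sub_C _),
          natDegree_prod_of_monic _ _ fun j _ => monic_X_sub_C _,
          natDegree_prod_of_monic _ _ fun j _ => monic_X_sub_C _, natDegree_X]
        simp only [natDegree_X_sub_C, Finset.sum_const, smul_eq_mul, mul_one]
        rw [Finset.card_sdiff_of_subset hJs]
        omega
      have hcoeff : G.coeff (m + 1) = 0 := by
        rw [hG, coeff_sub, coeff_add, finset_sum_coeff, finset_sum_coeff]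
        have e1 : ∑ I ∈ s.powersetCard (k' + 1), (C (w I * ∏ i ∈ I, x i) *
            ((∏ i ∈ I, (C t * X - C (x i))) * ∏ j ∈ s \ I, (X - C (x j)))).coeff (m + 1)
            = 0 := by
          refine Finset.sum_eq_zero fun I hI => ?_
          exact coeff_eq_zero_of_natDegree_lt ((hterm1deg I hI).trans_lt (Nat.lt_succ_self m))
        have e2 : ∑ J ∈ s.powersetCard k', (C (w J * ∏ i ∈ J, x i) *
            (X * ((∏ j ∈ s \ J, (X - C (t * x j))) * ∏ j ∈ J, (X - C (x j))))).coeff (m + 1)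
            = R1 := by
          rw [← hIH0]
          refine Finset.sum_congr rfl fun J hJ => ?_
          rw [coeff_C_mul, ← hQdeg J hJ, (hQmonic J).coeff_natDegree, mul_one]
        have e3 : ((C R0 + C R1 * X) * P).coeff (m + 1) = R1 := by
          rw [add_mul, coeff_add]
          have h4 : (C R0 * P).coeff (m + 1) = 0 :=
            coeff_eq_zero_of_natDegree_lt ((natDegree_C_mul_le _ _).trans_lt (by omega))
          have hXP : (X * P).Monic := monic_X.mul hPm
          have hXPdeg : (X * P).natDegree = m + 1 := by
            rw [monic_X.natDegree_mul hPm, hPdeg, natDegree_X, add_comm]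
          rw [h4, zero_add, mul_assoc, coeff_C_mul, ← hXPdeg, hXP.coeff_natDegree, mul_one]
        rw [e1, e2, e3, zero_add, sub_self]
      have hGdeg : G.natDegree ≤ m := by
        have h1 : G.natDegree ≤ m + 1 := by
          rw [hG]
          refine (natDegree_sub_le _ _).trans
            (max_le ((natDegree_add_le _ _).trans (max_le ?_ ?_)) ?_)
          · exact natDegree_sum_le_of_forall_le _ _ fun I hI =>
              (hterm1deg I hI).trans (Nat.le_succ m)
          · exact natDegree_sum_le_of_forall_le _ _ fun J hJ =>
              (natDegree_C_mul_le _ _).trans (hQdeg J hJ).le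
          · refine natDegree_mul_le.trans ?_
            have h5 : (C R0 + C R1 * X).natDegree ≤ 1 := by
              refine (natDegree_add_le _ _).trans (max_le (by simp) ?_)
              exact (natDegree_C_mul_le _ _).trans_eq natDegree_X
            omega
        rw [Polynomial.natDegree_le_iff_coeff_eq_zero]
        intro N hN
        rcases eq_or_lt_of_le (Nat.succ_le_of_lt hN) with h | h
        · rw [← h]; exact hcoeff
        · exact coeff_eq_zero_of_natDegree_lt (h1.trans_lt h)
      have hGroots : ∀ y ∈ insert (0 : F) (s.image x), G.eval y = 0 := by
        intro y hy
        rw [Finset.mem_insert, Finset.mem_image] at hy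
        obtain rfl | ⟨l, hl, rfl⟩ := hy
        · rw [hG]
          simp only [eval_sub, eval_add, eval_finset_sum, eval_mul, eval_prod, eval_C,
            eval_X, mul_zero, zero_mul, zero_sub, add_zero, Finset.sum_const_zero, hP]
          rw [sub_eq_zero, ← hIH1, Finset.sum_mul]
          refine Finset.sum_congr rfl fun I hI => ?_
          obtain ⟨hIs, -⟩ := Finset.mem_powersetCard.mp hI
          rw [mul_comm (∏ i ∈ I, -x i) (∏ j ∈ s \ I, -x j), Finset.prod_sdiff hIs]
        · rw [hG]
          simp only [eval_sub, eval_add, eval_finset_sum, eval_mul, eval_prod, eval_C,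
            eval_X, hP]
          rw [Finset.prod_eq_zero hl (sub_self (x l)), mul_zero, sub_zero]
          have hv1 : ∀ I ∈ s.powersetCard (k' + 1), l ∉ I →
              (w I * ∏ i ∈ I, x i) *
                ((∏ i ∈ I, (t * x l - x i)) * ∏ j ∈ s \ I, (x l - x j)) = 0 := by
            intro I hI hlI
            rw [Finset.prod_eq_zero (Finset.mem_sdiff.mpr ⟨hl, hlI⟩) (sub_self (x l)), mul_zero,
              mul_zero]
          have hv2 : ∀ J ∈ s.powersetCard k', l ∈ J →
              (w J * ∏ i ∈ J, x i) *
                (x l * ((∏ j ∈ s \ J, (x l - t * x j)) * ∏ j ∈ J, (x l - x j))) = 0 := by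
            intro J hJ hlJ
            rw [Finset.prod_eq_zero (f := fun j => x l - x j) hlJ (sub_self (x l)), mul_zero,
              mul_zero, mul_zero]
          rw [sum_shift_to_erase _ hl k' hv1, sum_restrict_to_erase _ k' hv2]
          rw [← Finset.sum_add_distrib]
          refine Finset.sum_eq_zero fun J hJ => ?_
          obtain ⟨hJe, hJc⟩ := Finset.mem_powersetCard.mp hJ
          have hlJ : l ∉ J := fun h => Finset.notMem_erase l s (hJe h)
          have hJs : J ⊆ s := hJe.trans (Finset.erase_subset _ _)
          have hSdef : s \ J = insert l (s \ insert l J) := by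
            ext a
            simp only [Finset.mem_sdiff, Finset.mem_insert]
            constructor
            · rintro ⟨has, haJ⟩
              by_cases h : a = l
              · exact Or.inl h
              · exact Or.inr ⟨has, by simp [h, haJ]⟩
            · rintro (rfl | ⟨has, ha⟩)
              · exact ⟨hl, hlJ⟩
              · exact ⟨has, fun h => ha (Or.inr h)⟩
          have hlS : l ∉ s \ insert l J := by simp
          have hne : ∀ j ∈ s, j ≠ l → x l - x j ≠ 0 := by
            intro j hjs hjl
            exact sub_ne_zero_of_ne fun h =>
              hjl (hinj' (Finset.mem_coe.mpr hl) (Finset.mem_coe.mpr hjs) h).symm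
          have c1 : (∏ j ∈ s \ insert l J, ((x l - t * x j) / (x l - x j))) *
              ∏ j ∈ s \ insert l J, (x l - x j)
              = ∏ j ∈ s \ insert l J, (x l - t * x j) := by
            rw [← Finset.prod_mul_distrib]
            refine Finset.prod_congr rfl fun j hjS => ?_
            have hjs : j ∈ s := (Finset.mem_sdiff.mp hjS).1
            have hjl : j ≠ l := fun h => hlS (h ▸ hjS)
            exact div_mul_cancel₀ _ (hne j hjs hjl)
          have c2 : (∏ i ∈ J, ((x i - t * x l) / (x i - x l))) * ∏ i ∈ J, (x l - x i)
              = ∏ i ∈ J, (t * x l - x i) := by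
            rw [← Finset.prod_mul_distrib]
            refine Finset.prod_congr rfl fun i hiJ => ?_
            have his : i ∈ s := hJs hiJ
            have hil : i ≠ l := fun h => hlJ (h ▸ hiJ)
            have hne' : x i - x l ≠ 0 := fun h => (hne i his hil) (by
              have := sub_eq_zero.mp h
              rw [this, sub_self])
            field_simp
            ring
          simp only [hw, hSdef, Finset.prod_insert hlJ, Finset.prod_insert hlS,
            Finset.prod_mul_distrib]
          linear_combination ((t * x l - x l) * (x l * ((∏ i ∈ J, x i) *
              ((∏ i ∈ J, ∏ j ∈ s \ insert l J, ((x i - t * x j) / (x i - x j))) *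
                ∏ i ∈ J, (t * x l - x i))))) * c1 +
            ((x l - t * x l) * (x l * ((∏ i ∈ J, x i) *
              ((∏ i ∈ J, ∏ j ∈ s \ insert l J, ((x i - t * x j) / (x i - x j))) *
                ∏ j ∈ s \ insert l J, (x l - t * x j))))) * c2
      have hG0 : G = 0 := by
        apply Polynomial.eq_zero_of_natDegree_lt_card_of_eval_eq_zero' G _ hGroots
        have hcard : (insert (0 : F) (s.image x)).card = m + 1 := by
          rw [Finset.card_insert_of_notMem, Finset.card_image_of_injOn hinj']
          simp only [Finset.mem_image, not_exists]
          intro j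
          rintro ⟨hj, h⟩
          exact h0' j hj h
        omega
      have hG0 : G = 0 := hG0
      have hPu : (∏ j ∈ s, (u - x j)) ≠ 0 :=
        Finset.prod_ne_zero_iff.mpr fun j hj => sub_ne_zero_of_ne (Ne.symm (hxu j hj))
      have hEvalu : G.eval u = 0 := by rw [hG0]; simp
      rw [hG] at hEvalu
      simp only [eval_sub, eval_add, eval_finset_sum, eval_mul, eval_prod, eval_C, eval_X, hP,
        hw] at hEvalu
      have hdisj : Disjoint (s.powersetCard (k' + 1)) ((s.powersetCard k').image (insert c)) := by
        rw [Finset.disjoint_left]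
        intro I hI hI2
        obtain ⟨J, hJ, rfl⟩ := Finset.mem_image.mp hI2
        exact hc ((Finset.mem_powersetCard.mp hI).1 (Finset.mem_insert_self c J))
      have hinsinj : ∀ a ∈ s.powersetCard k', ∀ b ∈ s.powersetCard k',
          insert c a = insert c b → a = b := by
        intro a ha b hb hab
        have ha' : c ∉ a := fun h => hc ((Finset.mem_powersetCard.mp ha).1 h)
        have hb' : c ∉ b := fun h => hc ((Finset.mem_powersetCard.mp hb).1 h)
        rw [← Finset.erase_insert ha', ← Finset.erase_insert hb', hab]
      rw [Finset.powersetCard_succ_insert hc, Finset.sum_union hdisj, Finset.sum_union hdisj,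
        Finset.sum_image hinsinj, Finset.sum_image hinsinj]
      apply mul_right_cancel₀ hPu
      rw [add_mul, add_mul, Finset.sum_mul, Finset.sum_mul, Finset.sum_mul, Finset.sum_mul]
      have ha : ∀ I ∈ s.powersetCard (k' + 1),
          ((∏ i ∈ I, ∏ j ∈ insert c s \ I, (x i - t * x j) / (x i - x j)) * ∏ i ∈ I, x i) *
              ∏ j ∈ s, (u - x j)
            = ((∏ i ∈ I, ∏ j ∈ s \ I, (x i - t * x j) / (x i - x j)) * ∏ i ∈ I, x i) *
              ((∏ i ∈ I, (t * u - x i)) * ∏ j ∈ s \ I, (u - x j)) := by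
        intro I hI
        obtain ⟨hIs, -⟩ := Finset.mem_powersetCard.mp hI
        have hcI : c ∉ s \ I := fun h => hc (Finset.mem_sdiff.mp h).1
        have h1 : insert c s \ I = insert c (s \ I) := by
          ext a
          simp only [Finset.mem_insert, Finset.mem_sdiff]
          constructor
          · rintro ⟨rfl | has, haI⟩
            · exact Or.inl rfl
            · exact Or.inr ⟨has, haI⟩
          · rintro (rfl | ⟨has, haI⟩)
            · exact ⟨Or.inl rfl, fun h => hc (hIs h)⟩
            · exact ⟨Or.inr has, haI⟩
        rw [h1]
        simp only [Finset.prod_insert hcI, Finset.prod_mul_distrib]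
        rw [← Finset.prod_sdiff hIs (f := fun j => u - x j), ← hu]
        have c3 : (∏ i ∈ I, ((x i - t * u) / (x i - u))) * ∏ i ∈ I, (u - x i)
            = ∏ i ∈ I, (t * u - x i) := by
          rw [← Finset.prod_mul_distrib]
          refine Finset.prod_congr rfl fun i hiI => ?_
          have hne : x i - u ≠ 0 := sub_ne_zero_of_ne (hxu i (hIs hiI))
          field_simp
          ring
        linear_combination ((∏ i ∈ I, ∏ j ∈ s \ I, (x i - t * x j) / (x i - x j)) *
          (∏ i ∈ I, x i) * ∏ j ∈ s \ I, (u - x j)) * c3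
      have hb : ∀ J ∈ s.powersetCard k',
          ((∏ i ∈ insert c J, ∏ j ∈ insert c s \ insert c J, (x i - t * x j) / (x i - x j)) *
              ∏ i ∈ insert c J, x i) * ∏ j ∈ s, (u - x j)
            = ((∏ i ∈ J, ∏ j ∈ s \ J, (x i - t * x j) / (x i - x j)) * ∏ i ∈ J, x i) *
              (u * ((∏ j ∈ s \ J, (u - t * x j)) * ∏ j ∈ J, (u - x j))) := by
        intro J hJ
        obtain ⟨hJs, -⟩ := Finset.mem_powersetCard.mp hJ
        have hcJ : c ∉ J := fun h => hc (hJs h)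
        have h2 : insert c s \ insert c J = s \ J := by
          ext a
          simp only [Finset.mem_insert, Finset.mem_sdiff]
          constructor
          · rintro ⟨rfl | has, haJ⟩
            · exact absurd (Or.inl rfl) haJ
            · exact ⟨has, fun h => haJ (Or.inr h)⟩
          · rintro ⟨has, haJ⟩
            refine ⟨Or.inr has, ?_⟩
            rintro (rfl | h)
            · exact hc has
            · exact haJ h
        rw [h2]
        simp only [Finset.prod_insert hcJ]
        rw [← Finset.prod_sdiff hJs (f := fun j => u - x j), ← hu]
        have c4 : (∏ j ∈ s \ J, ((u - t * x j) / (u - x j))) * ∏ j ∈ s \ J, (u - x j)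
            = ∏ j ∈ s \ J, (u - t * x j) := by
          rw [← Finset.prod_mul_distrib]
          refine Finset.prod_congr rfl fun j hjS => ?_
          exact div_mul_cancel₀ _ (sub_ne_zero_of_ne (Ne.symm (hxu j (Finset.mem_sdiff.mp hjS).1)))
        linear_combination ((∏ i ∈ J, ∏ j ∈ s \ J, (x i - t * x j) / (x i - x j)) *
          (u * ∏ i ∈ J, x i) * ∏ j ∈ J, (u - x j)) * c4
      have hc2 : ∀ J ∈ s.powersetCard k',
          (∏ i ∈ insert c J, x i) * ∏ j ∈ s, (u - x j)
            = ((∏ i ∈ J, x i) * ∏ j ∈ s, (u - x j)) * u := by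
        intro J hJ
        have hcJ : c ∉ J := fun h => hc ((Finset.mem_powersetCard.mp hJ).1 h)
        rw [Finset.prod_insert hcJ, ← hu]
        ring
      rw [Finset.sum_congr rfl ha, Finset.sum_congr rfl hb, Finset.sum_congr rfl hc2]
      rw [← Finset.sum_mul, ← Finset.sum_mul, ← Finset.sum_mul, ← hR0, ← hR1]
      linear_combination hEvalu

/-- (Garsia–Tesler identity) For every `0 ≤ k ≤ N`,
`Σ_I (∏_{i∈I, j∉I} (x_i − t x_j)/(x_i − x_j)) ∏_{i∈I} x_i = e_k(x_1,…,x_N)`,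
the sum being over all `k`-element subsets `I` of `{1,…,N}`;
in particular the left-hand side does not depend on `t`. -/
theorem garsia_tesler_identity (N k : ℕ) (hk : k ≤ N) :
    ∑ I ∈ powersetCard k (univ : Finset (Fin N)),
        (∏ i ∈ I, ∏ j ∈ univ \ I, (xGT i - tGT N * xGT j) / (xGT i - xGT j)) *
          ∏ i ∈ I, xGT i
      = ∑ I ∈ powersetCard k (univ : Finset (Fin N)), ∏ i ∈ I, xGT i := by
  have halg : Function.Injective (algebraMap (MvPolynomial (Option (Fin N)) ℚ) (GTField N)) :=
    IsFractionRing.injective _ _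
  have h0 : ∀ i ∈ (univ : Finset (Fin N)), xGT i ≠ 0 := by
    intro i _ h
    refine MvPolynomial.X_ne_zero (R := ℚ) (some i) (halg ?_)
    rw [map_zero]
    exact h
  have hinj : Set.InjOn xGT ((univ : Finset (Fin N)) : Set (Fin N)) := by
    intro i _ j _ h
    have h2 := halg h
    exact Option.some_injective _ (MvPolynomial.X_injective h2)
  exact gt_key (tGT N) xGT univ h0 hinj k

end
end

section
/- Let λ be a partition with at most N parts and let k satisfy ℓ(λ) ≤ k ≤ N. Then in the polynomial ring ℤ[q,t] one has c_{λ+(1^k)}(q,t) = c_λ(q,t) · ∏_{i=1}^k (1 − t^{k+1−i} q^{λ_i}), where c_ν(q,t) = ∏_{s ∈ ν} (1 − q^{a(s)} t^{l(s)+1}), the product being over all squares s of the diagram of ν. -/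
open Finset

/-- `λ + (1^k)`: add one to each of the first `k` parts. -/
def addCol (k : ℕ) (lam : ℕ → ℕ) : ℕ → ℕ := fun i => if i < k then lam i + 1 else lam i

/-- The leg length `l(s)` of the square `s = (i,j)` (`0`-indexed) in the diagram of a
partition `μ` with at most `N` parts: the number of squares strictly below `s`. -/
def legLen (N : ℕ) (mu : ℕ → ℕ) (i j : ℕ) : ℕ :=
  ((range N).filter fun i' => i < i' ∧ j + 1 ≤ mu i').card

/-- `c_μ(q,t) = ∏_{s ∈ μ} (1 - q^{a(s)} t^{l(s)+1})` as an element of a commutative ring,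
for a partition `μ` with at most `N` parts; the arm of `s=(i,j)` (`0`-indexed) is
`μ_i - (j+1)`. -/
def cNorm {R : Type*} [CommRing R] (N : ℕ) (mu : ℕ → ℕ) (q t : R) : R :=
  ∏ i ∈ range N, ∏ j ∈ range (mu i), (1 - q ^ (mu i - (j + 1)) * t ^ (legLen N mu i j + 1))

/-- (Lemma 3) For a partition `λ` with at most `N` parts and `ℓ(λ) ≤ k ≤ N`, in `ℤ[q,t]`
one has `c_{λ+(1^k)}(q,t) = c_λ(q,t) · ∏_{i=1}^k (1 − t^{k+1−i} q^{λ_i})`. -/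
theorem cNorm_addCol (N k : ℕ) (hkN : k ≤ N)
    (lam : ℕ → ℕ) (hanti : Antitone lam) (hlen : ∀ i, k ≤ i → lam i = 0) :
    cNorm N (addCol k lam) (MvPolynomial.X 0 : MvPolynomial (Fin 2) ℤ) (MvPolynomial.X 1)
      = cNorm N lam (MvPolynomial.X 0 : MvPolynomial (Fin 2) ℤ) (MvPolynomial.X 1) *
          ∏ i ∈ range k,
            (1 - (MvPolynomial.X 1 : MvPolynomial (Fin 2) ℤ) ^ (k - i) *
              (MvPolynomial.X 0 : MvPolynomial (Fin 2) ℤ) ^ lam i) := by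
  set q : MvPolynomial (Fin 2) ℤ := MvPolynomial.X 0 with hq
  set t : MvPolynomial (Fin 2) ℤ := MvPolynomial.X 1 with ht
  have leg1 : ∀ i j, i < k → legLen N (addCol k lam) i (j + 1) = legLen N lam i j := by
    intro i j hi
    unfold legLen
    congr 1
    apply Finset.filter_congr
    intro i' _
    unfold addCol
    by_cases h : i' < k
    · simp only [h, if_true]
      constructor <;> rintro ⟨h1, h2⟩ <;> exact ⟨h1, by omega⟩
    · simp only [h, if_false]
      have h0 : lam i' = 0 := hlen i' (le_of_not_gt h)
      constructor <;> rintro ⟨h1, h2⟩ <;> omega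
  have leg2 : ∀ i, i < k → legLen N (addCol k lam) i 0 = k - i - 1 := by
    intro i hi
    unfold legLen
    have heq : ((range N).filter fun i' => i < i' ∧ 0 + 1 ≤ addCol k lam i')
        = Finset.Ico (i + 1) k := by
      ext i'
      simp only [Finset.mem_filter, Finset.mem_range, Finset.mem_Ico]; simp only [addCol]
      constructor
      · rintro ⟨h1, h2, h3⟩
        by_cases h : i' < k
        · omega
        · simp only [h, if_false] at h3
          have := hlen i' (le_of_not_gt h); omega
      · rintro ⟨h1, h2⟩
        refine ⟨by omega, by omega, ?_⟩
        simp [show i' < k from h2]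
    rw [heq, Nat.card_Ico]
    omega
  have key : ∀ i ∈ range N,
      (∏ j ∈ range (addCol k lam i),
        (1 - q ^ (addCol k lam i - (j + 1)) * t ^ (legLen N (addCol k lam) i j + 1)))
      = (∏ j ∈ range (lam i), (1 - q ^ (lam i - (j + 1)) * t ^ (legLen N lam i j + 1)))
        * (if i < k then (1 - t ^ (k - i) * q ^ (lam i)) else 1) := by
    intro i _
    by_cases hi : i < k
    · simp only [hi, if_true]
      have hμ : addCol k lam i = lam i + 1 := by simp [addCol, hi]
      rw [hμ, Finset.prod_range_succ']
      refine congrArg₂ (· * ·) ?_ ?_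
      · apply Finset.prod_congr rfl
        intro j hj
        rw [leg1 i j hi]
        have : lam i + 1 - (j + 1 + 1) = lam i - (j + 1) := by omega
        rw [this]
      · rw [leg2 i hi]
        have h1 : lam i + 1 - (0 + 1) = lam i := by omega
        have h2 : k - i - 1 + 1 = k - i := by omega
        rw [h1, h2]
        ring
    · have hμ : addCol k lam i = lam i := by simp [addCol, hi]
      have h0 : lam i = 0 := hlen i (le_of_not_gt hi)
      simp [hi, hμ, h0]
  rw [cNorm, cNorm, Finset.prod_congr rfl key, Finset.prod_mul_distrib]
  congr 1
  rw [← Finset.prod_subset (Finset.range_subset_range.2 hkN)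
    (fun x _ hx => if_neg (by simpa using hx))]
  exact Finset.prod_congr rfl fun i hi => if_pos (Finset.mem_range.1 hi)
end

section
/- In k+1 variables x_1,…,x_{k+1}, for every 0 ≤ r ≤ k+1 and every rational function f ∈ F(x_1,…,x_{k+1}), one has M_{k+1}^r (x_1⋯x_k · f) = q^{r−1} · x_1⋯x_k · M_{k+1}^r(f) + (q^r − q^{r−1}) · x_1⋯x_k · Σ_{I ⊆ {1,…,k}, |I| = r} A_I(x;t) ∏_{i∈I} T_{q,x_i} f, where in A_I(x;t) the ambient index set is the full set {1,…,k+1} (and the sum is empty when r = k+1). -/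
open MvPolynomial Finset

noncomputable section

variable {F : Type*} [Field F]

/-- The field `F(x_1, …, x_N)` of rational functions in `N` variables. -/
abbrev RatFunc' (N : ℕ) (F : Type*) [Field F] := FractionRing (MvPolynomial (Fin N) F)

/-- The algebra automorphism of `F[x_1,…,x_N]` multiplying `x_i` by `q` for `i ∈ S`. -/
def scaleAlg (N : ℕ) (q : F) (hq : q ≠ 0) (S : Finset (Fin N)) :
    MvPolynomial (Fin N) F ≃ₐ[F] MvPolynomial (Fin N) F :=
  AlgEquiv.ofAlgHom
    (aeval fun i => if i ∈ S then MvPolynomial.C q * X i else X i)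
    (aeval fun i => if i ∈ S then MvPolynomial.C q⁻¹ * X i else X i)
    (by
      apply MvPolynomial.algHom_ext
      intro i
      by_cases h : i ∈ S <;>
        simp [h, ← mul_assoc, ← MvPolynomial.C_mul, inv_mul_cancel₀ hq, mul_inv_cancel₀ hq])
    (by
      apply MvPolynomial.algHom_ext
      intro i
      by_cases h : i ∈ S <;>
        simp [h, ← mul_assoc, ← MvPolynomial.C_mul, inv_mul_cancel₀ hq, mul_inv_cancel₀ hq])

/-- The shift operator `∏_{i ∈ S} T_{q,x_i}` on `F(x_1,…,x_N)`:
the field automorphism replacing `x_i` by `q x_i` for every `i ∈ S`. -/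
def shiftOp (N : ℕ) (q : F) (hq : q ≠ 0) (S : Finset (Fin N)) :
    RatFunc' N F ≃+* RatFunc' N F :=
  IsFractionRing.ringEquivOfRingEquiv (scaleAlg N q hq S).toRingEquiv

/-- The variable `x_i` as an element of `F(x_1,…,x_N)`. -/
def xv {N : ℕ} (i : Fin N) : RatFunc' N F := algebraMap (MvPolynomial (Fin N) F) _ (X i)

/-- A constant `c ∈ F` as an element of `F(x_1,…,x_N)`. -/
def cf {N : ℕ} (c : F) : RatFunc' N F := algebraMap (MvPolynomial (Fin N) F) _ (MvPolynomial.C c)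

/-- The coefficient `A_I(x;t)` with ambient index set `S`. -/
def Acoef {N : ℕ} (t : F) (S I : Finset (Fin N)) : RatFunc' N F :=
  cf (t ^ (I.card * (I.card - 1) / 2)) *
    ∏ i ∈ I, ∏ j ∈ S \ I, (cf t * xv i - xv j) / (xv i - xv j)

/-- The Macdonald operator `M_I^r` (in the variables `x_i`, `i ∈ I`),
acting on `F(x_1,…,x_N)`. -/
def Mr {N : ℕ} (q : F) (hq : q ≠ 0) (t : F) (I : Finset (Fin N)) (r : ℕ)
    (f : RatFunc' N F) : RatFunc' N F :=
  ∑ I' ∈ powersetCard r I, Acoef t I I' * shiftOp N q hq I' f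

/-- The generating Macdonald operator `M_I(Z;q,t) = Σ_r M_I^r Z^r`. -/
def MacOp {N : ℕ} (q : F) (hq : q ≠ 0) (t : F) (I : Finset (Fin N)) (Z : F)
    (f : RatFunc' N F) : RatFunc' N F :=
  ∑ r ∈ range (I.card + 1), cf (Z ^ r) * Mr q hq t I r f

/-- `e_N = x_1 ⋯ x_N`. -/
def eNprod (N : ℕ) : RatFunc' N F := ∏ i : Fin N, xv i

/-- The `k`-th elementary symmetric polynomial as an element of `F(x_1,…,x_N)`. -/
def ekv (N k : ℕ) : RatFunc' N F :=
  ∑ I ∈ powersetCard k (univ : Finset (Fin N)), ∏ i ∈ I, xv i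



lemma shiftOp_xv {N : ℕ} (q : F) (hq : q ≠ 0) (S : Finset (Fin N)) (i : Fin N) :
    shiftOp N q hq S (xv i) = if i ∈ S then cf q * xv i else xv i := by
  rw [shiftOp, xv, IsFractionRing.ringEquivOfRingEquiv_algebraMap]
  by_cases h : i ∈ S <;> simp [scaleAlg, h, cf, xv]

lemma shiftOp_prod_xv {N : ℕ} (q : F) (hq : q ≠ 0) (S E : Finset (Fin N)) :
    shiftOp N q hq S (∏ i ∈ E, xv i) = cf (q ^ (E ∩ S).card) * ∏ i ∈ E, xv i := by
  rw [map_prod]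
  have : ∀ i ∈ E, shiftOp N q hq S (xv i) = (if i ∈ S then cf q else 1) * xv i := by
    intro i _
    rw [shiftOp_xv q hq]
    by_cases h : i ∈ S <;> simp [h]
  rw [Finset.prod_congr rfl this, Finset.prod_mul_distrib, Finset.prod_ite, Finset.prod_const,
    Finset.prod_const_one, Finset.filter_mem_eq_inter]
  simp [cf, map_pow]

set_option maxHeartbeats 2000000 in
/-- In `k+1` variables, for `0 ≤ r ≤ k+1`,
`M_{k+1}^r (x_1⋯x_k · f) = q^{r-1} x_1⋯x_k M_{k+1}^r(f)
  + (q^r - q^{r-1}) x_1⋯x_k Σ_{I ⊆ {1,…,k}, |I|=r} A_I(x;t) ∏_{i∈I} T_{q,x_i} f`,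
where in `A_I(x;t)` the ambient index set is the full `{1,…,k+1}`. -/
theorem macdonald_op_x1k_commutation {F : Type*} [Field F] {k : ℕ}
    (q t : F) (hq : q ≠ 0) (ht : t ≠ 0) (r : ℕ) (hr : r ≤ k + 1)
    (f : RatFunc' (k + 1) F) :
    Mr q hq t (univ : Finset (Fin (k + 1))) r ((∏ i ∈ univ.erase (Fin.last k), xv i) * f)
      = cf (q ^ ((r : ℤ) - 1)) * ((∏ i ∈ univ.erase (Fin.last k), xv i) *
          Mr q hq t (univ : Finset (Fin (k + 1))) r f)
        + cf (q ^ (r : ℤ) - q ^ ((r : ℤ) - 1)) * ((∏ i ∈ univ.erase (Fin.last k), xv i) *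
            ∑ I ∈ powersetCard r (univ.erase (Fin.last k)),
              Acoef t univ I * shiftOp (k + 1) q hq I f) := by
  classical
  set E := (univ : Finset (Fin (k+1))).erase (Fin.last k) with hE
  set P : RatFunc' (k+1) F := ∏ i ∈ E, xv i with hP
  have hfilter : (powersetCard r (univ : Finset (Fin (k+1)))).filter (fun I' => Fin.last k ∉ I')
      = powersetCard r E := by
    ext I'
    simp only [Finset.mem_filter, Finset.mem_powersetCard, hE, Finset.subset_erase,
      Finset.subset_univ, true_and]
    tauto
  have key : ∀ I' ∈ powersetCard r (univ : Finset (Fin (k+1))),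
      Acoef t univ I' * shiftOp (k+1) q hq I' (P * f)
        = cf (q ^ ((r:ℤ)-1)) * (P * (Acoef t univ I' * shiftOp (k+1) q hq I' f))
          + (if Fin.last k ∉ I' then
              cf (q ^ (r:ℤ) - q ^ ((r:ℤ)-1)) * (P * (Acoef t univ I' * shiftOp (k+1) q hq I' f))
            else 0) := by
    intro I' hI'
    rw [Finset.mem_powersetCard] at hI'
    obtain ⟨hsub, hcard⟩ := hI'
    rw [map_mul, shiftOp_prod_xv]
    have hinter : E ∩ I' = I'.erase (Fin.last k) := by
      rw [hE, Finset.erase_inter, Finset.univ_inter]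
    by_cases h : Fin.last k ∈ I'
    · have hr1 : 1 ≤ r := by
        rw [← hcard]; exact Finset.card_pos.mpr ⟨_, h⟩
      have hc : (E ∩ I').card = r - 1 := by
        rw [hinter, Finset.card_erase_of_mem h, hcard]
      have hq1 : q ^ (r - 1) = q ^ ((r:ℤ) - 1) := by
        rw [← zpow_natCast, Nat.cast_sub hr1]; norm_num
      rw [hc, hq1, if_neg (by simpa using h)]
      ring
    · have hc : (E ∩ I').card = r := by
        rw [hinter, Finset.erase_eq_of_notMem h, hcard]
      have hcf : (cf (q ^ r) : RatFunc' (k+1) F)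
          = cf (q ^ ((r:ℤ)-1)) + cf (q ^ (r:ℤ) - q ^ ((r:ℤ)-1)) := by
        have : q ^ r = q ^ ((r:ℤ) - 1) + (q ^ (r:ℤ) - q ^ ((r:ℤ)-1)) := by
          rw [← zpow_natCast]; ring
        rw [this]; simp [cf, map_add]
      rw [hc, hcf, if_pos h]
      ring
  rw [Mr, Finset.sum_congr rfl key, Finset.sum_add_distrib, ← Finset.sum_filter, hfilter, Mr]
  simp only [Finset.mul_sum]


end
end

section
/- Let F be a field and q, t ∈ F nonzero with (q^{−1};t^{−1})_{N−k} ≠ 0, and let 1 ≤ k ≤ N. Suppose (P_μ)_μ is a family of elements of F(x_1,…,x_N), indexed by partitions μ with at most N parts, such that M_N(X; q, t) P_μ = a_μ(X; q, t) P_μ for all X ∈ F and all μ, where a_μ(X;q,t) = ∏_{i=1}^N (1 + X q^{μ_i} t^{N−i}). Let λ be a partition with ℓ(λ) ≤ k and suppose that e_k · P_λ = P_{λ+(1^k)} + Σ_μ ψ_μ P_μ, where the sum runs over partitions μ ≠ λ+(1^k) with at most N parts such that λ ⊆ μ and μ−λ is a vertical k-strip, and ψ_μ ∈ F. Then (q^{−1};t^{−1})_{N−k}^{−1}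 · M_N(−t^{k+1−N} q^{−1}; q, t)(e_k · P_λ) = (∏_{i=1}^k (1 − t^{k+1−i} q^{λ_i})) · P_{λ+(1^k)}. -/
open MvPolynomial Finset
open scoped Classical

noncomputable section

variable {F : Type*} [Field F]

/-- The `q`-Pochhammer symbol `(a;p)_n = ∏_{m=0}^{n-1} (1 - a p^m)`. -/
def qPoch {F : Type*} [Field F] (a p : F) (n : ℕ) : F := ∏ m ∈ range n, (1 - a * p ^ m)

/-- The set of partitions `μ` with at most `N` parts such that `λ ⊆ μ` and `μ - λ` is a
vertical `k`-strip (for `λ` a partition with at most `N` parts). -/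
def vStrips (N k : ℕ) (lam : ℕ → ℕ) : Finset (ℕ → ℕ) :=
  ((powersetCard k (range N)).image fun S => fun i => lam i + if i ∈ S then 1 else 0).filter
    fun mu => Antitone mu


section AuxLemmas

lemma shiftOp_cf {N : ℕ} (q : F) (hq : q ≠ 0) (S : Finset (Fin N)) (c : F) :
    shiftOp N q hq S (cf c) = cf c := by
  rw [shiftOp, cf, IsFractionRing.ringEquivOfRingEquiv_algebraMap]
  have h : (scaleAlg N q hq S).toRingEquiv (MvPolynomial.C c) = MvPolynomial.C c := by
    show (scaleAlg N q hq S) (MvPolynomial.C c) = MvPolynomial.C c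
    simp [scaleAlg, ← MvPolynomial.algebraMap_eq]
  rw [h]

lemma MacOp_add {N : ℕ} (q : F) (hq : q ≠ 0) (t : F) (I : Finset (Fin N)) (Z : F)
    (f g : RatFunc' N F) :
    MacOp q hq t I Z (f + g) = MacOp q hq t I Z f + MacOp q hq t I Z g := by
  simp only [MacOp, Mr, RingEquiv.map_add, mul_add, Finset.sum_add_distrib]

lemma MacOp_cf_mul {N : ℕ} (q : F) (hq : q ≠ 0) (t : F) (I : Finset (Fin N)) (Z : F)
    (c : F) (f : RatFunc' N F) :
    MacOp q hq t I Z (cf c * f) = cf c * MacOp q hq t I Z f := by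
  simp only [MacOp, Mr, RingEquiv.map_mul, shiftOp_cf, Finset.mul_sum]
  refine Finset.sum_congr rfl fun r _ => ?_
  refine Finset.sum_congr rfl fun I' _ => ?_
  ring

lemma MacOp_sum {N : ℕ} (q : F) (hq : q ≠ 0) (t : F) (I : Finset (Fin N)) (Z : F)
    {ι : Type*} (s : Finset ι) (g : ι → RatFunc' N F) :
    MacOp q hq t I Z (∑ x ∈ s, g x) = ∑ x ∈ s, MacOp q hq t I Z (g x) := by
  classical
  induction s using Finset.induction with
  | empty => simp [MacOp, Mr, RingEquiv.map_zero]
  | insert a s h ih => rw [Finset.sum_insert h, Finset.sum_insert h, MacOp_add, ih]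

lemma cf_mul {N : ℕ} (a b : F) : (cf a : RatFunc' N F) * cf b = cf (a * b) := by
  unfold cf
  rw [← map_mul, ← MvPolynomial.C_mul]

lemma zpow_helper {t : F} (ht : t ≠ 0) (z : ℤ) (n : ℕ) (e : ℤ) (h : z + (n : ℤ) = e) :
    t ^ z * t ^ n = t ^ e := by
  rw [← zpow_natCast t n, ← zpow_add₀ ht, h]

end AuxLemmas

/-- If the `P_μ` are joint eigenfunctions of the Macdonald operators and `e_k P_λ` expands
as `P_{λ+(1^k)}` plus lower terms indexed by vertical `k`-strips `μ ≠ λ+(1^k)`, then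
`(q^{-1};t^{-1})_{N-k}^{-1} M_N(-t^{k+1-N} q^{-1};q,t)(e_k P_λ)
  = ∏_{i=1}^k (1 - t^{k+1-i} q^{λ_i}) · P_{λ+(1^k)}`. -/
theorem creation_step_macdonald {F : Type*} [Field F] {N : ℕ}
    (q t : F) (hq : q ≠ 0) (ht : t ≠ 0) (k : ℕ) (hk1 : 1 ≤ k) (hkN : k ≤ N)
    (hpoch : qPoch q⁻¹ t⁻¹ (N - k) ≠ 0)
    (P : (ℕ → ℕ) → RatFunc' N F)
    (heig : ∀ mu : ℕ → ℕ, Antitone mu → (∀ i, N ≤ i → mu i = 0) → ∀ Z : F,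
      MacOp q hq t (univ : Finset (Fin N)) Z (P mu)
        = cf (∏ i ∈ range N, (1 + Z * q ^ mu i * t ^ (N - 1 - i))) * P mu)
    (lam : ℕ → ℕ) (hanti : Antitone lam) (hlen : ∀ i, k ≤ i → lam i = 0)
    (ψ : (ℕ → ℕ) → F)
    (hPieri : ekv N k * P lam = P (addCol k lam) +
        ∑ mu ∈ (vStrips N k lam).erase (addCol k lam), cf (ψ mu) * P mu) :
    cf (qPoch q⁻¹ t⁻¹ (N - k))⁻¹ *
        MacOp q hq t (univ : Finset (Fin N)) (-(t ^ ((k : ℤ) + 1 - (N : ℤ))) * q⁻¹)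
          (ekv N k * P lam)
      = cf (∏ i ∈ range k, (1 - t ^ (k - i) * q ^ lam i)) * P (addCol k lam) := by
  classical
  set Z : F := -(t ^ ((k : ℤ) + 1 - (N : ℤ))) * q⁻¹ with hZ
  have haddanti : Antitone (addCol k lam) := by
    intro i j hij
    have h1 := hanti hij
    by_cases hj : j < k
    · have hi : i < k := lt_of_le_of_lt hij hj
      simp only [addCol, if_pos hi, if_pos hj]; omega
    · have hj0 : lam j = 0 := hlen j (le_of_not_gt hj)
      by_cases hi : i < k
      · simp only [addCol, if_pos hi, if_neg hj]; omega
      · simp only [addCol, if_neg hi, if_neg hj]; omega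
  have haddzero : ∀ i, N ≤ i → addCol k lam i = 0 := by
    intro i hi
    have hki : ¬ i < k := by omega
    simp only [addCol, if_neg hki]
    exact hlen i (le_trans hkN hi)
  -- eigenvalue at addCol
  have hEplus : (∏ i ∈ range N, (1 + Z * q ^ (addCol k lam i) * t ^ (N - 1 - i)))
      = qPoch q⁻¹ t⁻¹ (N - k) * ∏ i ∈ range k, (1 - t ^ (k - i) * q ^ lam i) := by
    have hsplit : range N = range (k + (N - k)) := by
      rw [Nat.add_sub_cancel' hkN]
    have hfirst : (∏ i ∈ range k, (1 + Z * q ^ (addCol k lam i) * t ^ (N - 1 - i)))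
        = ∏ i ∈ range k, (1 - t ^ (k - i) * q ^ lam i) := by
      refine Finset.prod_congr rfl fun i hi => ?_
      have hik : i < k := Finset.mem_range.mp hi
      have hadd : addCol k lam i = lam i + 1 := by simp [addCol, hik]
      have h1 : t ^ ((k : ℤ) + 1 - (N : ℤ)) * t ^ (N - 1 - i)
          = t ^ ((k - i : ℕ) : ℤ) := zpow_helper ht _ _ _ (by omega)
      have h2 : t ^ ((k - i : ℕ) : ℤ) = t ^ (k - i) := by rw [zpow_natCast]
      calc 1 + Z * q ^ (addCol k lam i) * t ^ (N - 1 - i)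
          = 1 - (t ^ ((k : ℤ) + 1 - (N : ℤ)) * t ^ (N - 1 - i)) * q ^ lam i
              * (q⁻¹ * q) := by rw [hadd, hZ]; ring
        _ = 1 - t ^ (k - i) * q ^ lam i := by
            rw [h1, h2, inv_mul_cancel₀ hq, mul_one]
    have hsecond : (∏ m ∈ range (N - k),
          (1 + Z * q ^ (addCol k lam (k + m)) * t ^ (N - 1 - (k + m))))
        = qPoch q⁻¹ t⁻¹ (N - k) := by
      unfold qPoch
      refine Finset.prod_congr rfl fun m hm => ?_
      have hmNk : m < N - k := Finset.mem_range.mp hm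
      have hadd : addCol k lam (k + m) = 0 := by
        have hc : ¬ k + m < k := by omega
        simp only [addCol, if_neg hc]
        exact hlen (k + m) (by omega)
      have h1 : t ^ ((k : ℤ) + 1 - (N : ℤ)) * t ^ (N - 1 - (k + m))
          = t ^ (-(m : ℤ)) := zpow_helper ht _ _ _ (by omega)
      have h2 : t ^ (-(m : ℤ)) = (t⁻¹) ^ m := by
        rw [zpow_neg, zpow_natCast, inv_pow]
      calc 1 + Z * q ^ (addCol k lam (k + m)) * t ^ (N - 1 - (k + m))
          = 1 - q⁻¹ * (t ^ ((k : ℤ) + 1 - (N : ℤ)) * t ^ (N - 1 - (k + m))) := by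
            rw [hadd, hZ]; ring
        _ = 1 - q⁻¹ * t⁻¹ ^ m := by rw [h1, h2]
    rw [hsplit, Finset.prod_range_add, hfirst, hsecond, mul_comm]
  -- vanishing of eigenvalues on non-leading terms
  have hzero : ∀ mu ∈ (vStrips N k lam).erase (addCol k lam),
      (∏ i ∈ range N, (1 + Z * q ^ mu i * t ^ (N - 1 - i))) = 0 := by
    intro mu hmu
    obtain ⟨hne, hmem⟩ := Finset.mem_erase.mp hmu
    obtain ⟨hmem', hantimu⟩ := Finset.mem_filter.mp hmem
    obtain ⟨S, hS, hSeq⟩ := Finset.mem_image.mp hmem'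
    obtain ⟨hSsub, hScard⟩ := Finset.mem_powersetCard.mp hS
    have hkS : k ∈ S := by
      by_contra hkS
      have hmuk : mu k = 0 := by
        rw [← hSeq]; simp [hkS, hlen k le_rfl]
      have hSrange : S ⊆ range k := by
        intro j hj
        rw [Finset.mem_range]
        by_contra hjk
        have hkj : k ≤ j := le_of_not_gt hjk
        have hmuj : mu j = 1 := by
          rw [← hSeq]; simp [hj, hlen j hkj]
        have := hantimu hkj
        omega
      have hSeqr : S = range k := Finset.eq_of_subset_of_card_le hSrange
        (by rw [Finset.card_range, hScard])
      apply hne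
      funext i
      rw [← hSeq, hSeqr]
      by_cases hik : i < k <;> simp [addCol, hik]
    have hkN' : k < N := Finset.mem_range.mp (hSsub hkS)
    have hmuk : mu k = 1 := by
      rw [← hSeq]; simp [hkS, hlen k le_rfl]
    refine Finset.prod_eq_zero (Finset.mem_range.mpr hkN') ?_
    have h1 : t ^ ((k : ℤ) + 1 - (N : ℤ)) * t ^ (N - 1 - k) = t ^ (0 : ℤ) :=
      zpow_helper ht _ _ _ (by omega)
    rw [hmuk]
    calc 1 + Z * q ^ 1 * t ^ (N - 1 - k)
        = 1 - (t ^ ((k : ℤ) + 1 - (N : ℤ)) * t ^ (N - 1 - k)) * (q⁻¹ * q) := by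
          rw [hZ]; ring
      _ = 0 := by rw [h1, inv_mul_cancel₀ hq, zpow_zero, one_mul]; ring
  -- assemble
  rw [hPieri, MacOp_add, MacOp_sum]
  have hsum0 : (∑ mu ∈ (vStrips N k lam).erase (addCol k lam),
      MacOp q hq t (univ : Finset (Fin N)) Z (cf (ψ mu) * P mu)) = 0 := by
    refine Finset.sum_eq_zero fun mu hmu => ?_
    have hmem := Finset.mem_erase.mp hmu
    obtain ⟨hmem', hantimu⟩ := Finset.mem_filter.mp hmem.2
    obtain ⟨S, hS, hSeq⟩ := Finset.mem_image.mp hmem'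
    obtain ⟨hSsub, hScard⟩ := Finset.mem_powersetCard.mp hS
    have hmuzero : ∀ i, N ≤ i → mu i = 0 := by
      intro i hi
      have hiS : i ∉ S := fun h => by
        have := Finset.mem_range.mp (hSsub h); omega
      rw [← hSeq]
      simp [hiS, hlen i (le_trans hkN hi)]
    rw [MacOp_cf_mul, heig mu hantimu hmuzero Z, hzero mu hmu]
    simp [cf]
  rw [hsum0, add_zero, heig (addCol k lam) haddanti haddzero Z, hEplus,
    ← mul_assoc, cf_mul, ← mul_assoc, inv_mul_cancel₀ hpoch, one_mul]


end
end
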